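/- arXiv:1904.00864 — 3 statements merged into one kernel-verified Lean document; each statement's English description precedes it below -/
import Mathlib

section
/- Let Φ be an m×n matrix over ℝ such that every set of m columns of Φ is linearly independent, and let Ω ⊆ {1,...,n} with |Ω| < m. For index sets Γ, D ⊆ {1,...,n} with |D| < m, if a vector r ∈ range(Φ_{Ω\Γ}) does not lie in the union E of the subspaces range(Φ_J) over all J ⊆ {1,...,n} with |J ∩ (Ω\Γ)| < |Ω\Γ| and |J| < m, and if r ∈ range(Φ_D), then D ⊇ Ω\Γ. -/
open MeasureTheory Matrix

noncomputable def toE {m : ℕ} (v : Fin m → ℝ) : EuclideanSpace ℝ (Fin m) :=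
  (WithLp.equiv 2 (Fin m → ℝ)).symm v

noncomputable def ofE {m : ℕ} (v : EuclideanSpace ℝ (Fin m)) : Fin m → ℝ :=
  WithLp.equiv 2 (Fin m → ℝ) v

/-- The column space of the submatrix of `Φ` with columns indexed by `S`. -/
noncomputable def colSpan {m n : ℕ} (Φ : Matrix (Fin m) (Fin n) ℝ) (S : Set (Fin n)) :
    Submodule ℝ (EuclideanSpace ℝ (Fin m)) :=
  Submodule.span ℝ ((fun j => toE (fun i => Φ i j)) '' S)

/-- The columns of `Φ` indexed by `S` are linearly independent. -/
def colsLI {m n : ℕ} (Φ : Matrix (Fin m) (Fin n) ℝ) (S : Set (Fin n)) : Prop :=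
  LinearIndependent ℝ (fun j : S => toE (fun i => Φ i (j : Fin n)))

theorem stmt0 {m n : ℕ} (Φ : Matrix (Fin m) (Fin n) ℝ)
    (hspark : ∀ S : Finset (Fin n), S.card ≤ m → colsLI Φ ↑S)
    (Ω Γ D : Set (Fin n)) (hΩ : Ω.ncard < m) (hD : D.ncard < m)
    (r : EuclideanSpace ℝ (Fin m)) (hr : r ∈ colSpan Φ (Ω \ Γ))
    (hE : ∀ J : Set (Fin n), (J ∩ (Ω \ Γ)).ncard < (Ω \ Γ).ncard → J.ncard < m →
      r ∉ colSpan Φ J)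
    (hrD : r ∈ colSpan Φ D) : Ω \ Γ ⊆ D := by
  intro x hx
  by_contra hxD
  refine hE D ?_ hD hrD
  apply Set.ncard_lt_ncard
  · constructor
    · exact Set.inter_subset_right
    · intro hsub
      exact hxD (hsub hx).1
  · exact Set.toFinite _
end

section
/- Let Φ be an m×n real matrix such that every set of at most m of its columns is linearly independent. Let Ω, Γ ⊆ {1,...,n} with |Ω\Γ| < m, and let J ⊆ {1,...,n} with |J| < m and |J ∩ (Ω\Γ)| < |Ω\Γ|. Then the dimension of range(Φ_J) ∩ range(Φ_{Ω\Γ}) is strictly less than the dimension of range(Φ_{Ω\Γ}). -/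
open MeasureTheory Matrix

theorem stmt1 {m n : ℕ} (Φ : Matrix (Fin m) (Fin n) ℝ)
    (hspark : ∀ S : Finset (Fin n), S.card ≤ m → colsLI Φ ↑S)
    (Ω Γ J : Set (Fin n)) (hΩΓ : (Ω \ Γ).ncard < m) (hJ : J.ncard < m)
    (hcap : (J ∩ (Ω \ Γ)).ncard < (Ω \ Γ).ncard) :
    Module.finrank ℝ ↥(colSpan Φ J ⊓ colSpan Φ (Ω \ Γ)) <
      Module.finrank ℝ ↥(colSpan Φ (Ω \ Γ)) := by
  classical
  set f : Fin n → EuclideanSpace ℝ (Fin m) := fun j => toE (fun i => Φ i j) with hf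
  set D := Ω \ Γ with hD
  by_contra hle
  push_neg at hle
  -- the intersection equals colSpan Φ D
  have heq : colSpan Φ J ⊓ colSpan Φ D = colSpan Φ D :=
    Submodule.eq_of_le_of_finrank_le inf_le_right hle
  have hDJ : colSpan Φ D ≤ colSpan Φ J := heq ▸ inf_le_left
  -- find d ∈ D \ J
  have hDnsub : ¬ D ⊆ J := by
    intro hsub
    have : J ∩ D = D := by
      ext x; constructor
      · exact fun hx => hx.2
      · exact fun hx => ⟨hsub hx, hx⟩
    rw [this] at hcap
    exact lt_irrefl _ hcap
  obtain ⟨d, hdD, hdJ⟩ := Set.not_subset.mp hDnsub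
  have hJfin : J.Finite := Set.toFinite _
  -- f d ∈ colSpan Φ J
  have hmem : f d ∈ colSpan Φ J :=
    hDJ (Submodule.subset_span (Set.mem_image_of_mem _ hdD))
  -- consider the finset T = insert d J
  set T : Finset (Fin n) := insert d hJfin.toFinset with hT
  have hTcard : T.card ≤ m := by
    have h1 : T.card ≤ hJfin.toFinset.card + 1 := Finset.card_insert_le _ _
    have h2 : hJfin.toFinset.card = J.ncard :=
      (Set.ncard_eq_toFinset_card J hJfin).symm
    omega
  have hLI : LinearIndependent ℝ (fun j : (↑T : Set (Fin n)) => f (j : Fin n)) :=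
    hspark T hTcard
  have hdT : d ∈ (↑T : Set (Fin n)) := by simp [hT]
  have hJT : J ⊆ (↑T : Set (Fin n)) := by
    intro x hx
    simp only [hT, Finset.coe_insert, Set.mem_insert_iff, Set.Finite.coe_toFinset]
    exact Or.inr hx
  -- d, as an element of T, is not in the preimage of J
  have hnot : f d ∉ Submodule.span ℝ
      ((fun j : (↑T : Set (Fin n)) => f (j : Fin n)) '' {j : (↑T : Set (Fin n)) | (j : Fin n) ∈ J}) := by
    have := hLI.notMem_span_image (s := {j : (↑T : Set (Fin n)) | (j : Fin n) ∈ J})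
      (x := ⟨d, hdT⟩) (by simpa using hdJ)
    exact this
  have himg : (fun j : (↑T : Set (Fin n)) => f (j : Fin n)) ''
      {j : (↑T : Set (Fin n)) | (j : Fin n) ∈ J} = f '' J := by
    ext y
    constructor
    · rintro ⟨⟨x, hxT⟩, hxJ, rfl⟩
      exact ⟨x, hxJ, rfl⟩
    · rintro ⟨x, hxJ, rfl⟩
      exact ⟨⟨x, hJT hxJ⟩, hxJ, rfl⟩
  rw [himg] at hnot
  exact hnot hmem
end

section
/- Let Φ ∈ ℝ^{m×n} with every m columns linearly independent, Ω ⊆ {1,...,n} with |Ω| < m, and Γ ⊆ {1,...,n}. If r is drawn from a probability distribution on range(Φ_{Ω\Γ}) absolutely continuous with respect to Lebesgue measure on that subspace, then almost surely: every D ⊆ {1,...,n} with |D| < m and r ∈ range(Φ_D) satisfies D ⊇ Ω\Γ. -/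
/-! If `D` misses some `j ∈ Ω \ Γ` and `|D| < m`, then the columns indexed by `insert j D` are
independent, so column `j` lies outside `range Φ_D`. Hence `range Φ_D` meets `range Φ_{Ω\Γ}` in a
proper subspace, which is Lebesgue-null; the exceptional set is a finite union of such traces. -/

open MeasureTheory Matrix

lemma col_notMem_colSpan {m n : ℕ} (Φ : Matrix (Fin m) (Fin n) ℝ)
    (hspark : ∀ S : Finset (Fin n), S.card ≤ m → colsLI Φ ↑S)
    {D : Set (Fin n)} (hD : D.ncard < m) {j : Fin n} (hj : j ∉ D) :
    toE (fun i => Φ i j) ∉ colSpan Φ D := by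
  classical
  have hcard : (insert j D.toFinset).card ≤ m :=
    (Finset.card_insert_le _ _).trans (by rwa [Set.ncard_eq_toFinset_card'] at hD)
  have hli : colsLI Φ (insert j D) := by simpa using hspark _ hcard
  exact LinearIndepOn.notMem_span_of_insert hli hj

lemma colSpan_not_le {m n : ℕ} (Φ : Matrix (Fin m) (Fin n) ℝ)
    (hspark : ∀ S : Finset (Fin n), S.card ≤ m → colsLI Φ ↑S)
    {A D : Set (Fin n)} (hD : D.ncard < m) (hAD : ¬ A ⊆ D) :
    ¬ colSpan Φ A ≤ colSpan Φ D := fun hle => by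
  obtain ⟨j, hjA, hjD⟩ := Set.not_subset.1 hAD
  exact col_notMem_colSpan Φ hspark hD hjD (hle (Submodule.subset_span ⟨j, hjA, rfl⟩))

lemma Submodule.addHaar_setOf_mem_of_not_le {E : Type*} [NormedAddCommGroup E]
    [NormedSpace ℝ E] {V W : Submodule ℝ E} [FiniteDimensional ℝ V] [MeasurableSpace V]
    [BorelSpace V] (μ : Measure V) [μ.IsAddHaarMeasure] (h : ¬ V ≤ W) :
    μ {r : V | (r : E) ∈ W} = 0 :=
  Measure.addHaar_submodule μ (W.comap V.subtype) (by rwa [Ne, Submodule.comap_subtype_eq_top])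

theorem stmt8_general {m n : ℕ} (Φ : Matrix (Fin m) (Fin n) ℝ)
    (hspark : ∀ S : Finset (Fin n), S.card ≤ m → colsLI Φ ↑S)
    (Ω Γ : Set (Fin n))
    (μ : Measure ↥(colSpan Φ (Ω \ Γ)))
    (hac : μ ≪ volume) :
    μ {r : ↥(colSpan Φ (Ω \ Γ)) | ¬ ∀ D : Set (Fin n), D.ncard < m →
        (r : EuclideanSpace ℝ (Fin m)) ∈ colSpan Φ D → Ω \ Γ ⊆ D} = 0 := by
  apply hac
  have hbad : {r : ↥(colSpan Φ (Ω \ Γ)) | ¬ ∀ D : Set (Fin n), D.ncard < m →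
        (r : EuclideanSpace ℝ (Fin m)) ∈ colSpan Φ D → Ω \ Γ ⊆ D} =
      ⋃ D ∈ {D : Set (Fin n) | D.ncard < m ∧ ¬ Ω \ Γ ⊆ D},
        {r : ↥(colSpan Φ (Ω \ Γ)) | (r : EuclideanSpace ℝ (Fin m)) ∈ colSpan Φ D} := by
    ext r
    simp only [Set.mem_ofPred_eq, Set.mem_iUnion, exists_prop, not_forall]
    grind
  rw [hbad, measure_biUnion_null_iff (Set.to_countable _)]
  rintro D ⟨hD, hΩΓD⟩
  exact Submodule.addHaar_setOf_mem_of_not_le volume (colSpan_not_le Φ hspark hD hΩΓD)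

theorem stmt8 {m n : ℕ} (Φ : Matrix (Fin m) (Fin n) ℝ)
    (hspark : ∀ S : Finset (Fin n), S.card ≤ m → colsLI Φ ↑S)
    (Ω Γ : Set (Fin n)) (hΩ : Ω.ncard < m)
    (μ : Measure ↥(colSpan Φ (Ω \ Γ))) (hprob : IsProbabilityMeasure μ)
    (hac : μ ≪ volume) :
    μ {r : ↥(colSpan Φ (Ω \ Γ)) | ¬ ∀ D : Set (Fin n), D.ncard < m →
        (r : EuclideanSpace ℝ (Fin m)) ∈ colSpan Φ D → Ω \ Γ ⊆ D} = 0 :=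
  stmt8_general Φ hspark Ω Γ μ hac
end
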